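/- For every fixed s ≥ 1, every entry (Φ_{k:s})_{ij} of the product of consensus matrices converges to 1/N as k → ∞; that is, Φ_{k:s} converges entrywise to the doubly stochastic limit matrix (1/N)·1·1ᵀ, where 1 ∈ ℝ^N is the all-ones vector. (Lemma 1 of the paper, from Boyd et al.) -/

import Mathlib

/-!
Nonzero entries of a product of `L` consensus matrices are at least `β ^ L`, and positive
diagonals keep the positive part of a row from shrinking. Over each block of `B` steps the union
graph is strongly connected, so the block product moves positive mass out of the support of any
row that is not yet full; hence every product over `N - 1` consecutive blocks has all entries at
least `η = β ^ ((N - 1) * B)`. Multiplying a row vector on the right by a column-stochastic matrix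
with entries at least `η` shrinks its spread `max - min` by the factor `1 - 2η`, and
column-stochastic matrices never increase it. So the spread of every row of `Φ_{k:s}` tends to
`0`, and a row summing to `1` lies within its spread of `1 / N`.
-/

open Finset Matrix Filter Topology

section IntervalProd

variable {M : Type*} [Monoid M] (f : ℕ → M)

def intervalProd (a b : ℕ) : M :=
  ((List.range' a (b - a)).map f).prod

@[simp]
theorem intervalProd_self (a : ℕ) : intervalProd f a a = 1 := by
  simp [intervalProd]

theorem intervalProd_mul_intervalProd {a b c : ℕ} (hab : a ≤ b) (hbc : b ≤ c) :
    intervalProd f a b * intervalProd f b c = intervalProd f a c := by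
  have h := @List.range'_append a (b - a) (c - b) 1
  rw [show a + 1 * (b - a) = b by omega, show b - a + (c - b) = c - a by omega] at h
  rw [intervalProd, intervalProd, intervalProd, ← h, List.map_append, List.prod_append]

theorem intervalProd_succ_self (a : ℕ) : intervalProd f a (a + 1) = f a := by
  simp [intervalProd]

theorem intervalProd_comp_succ (a b : ℕ) :
    intervalProd (fun k => f (k + 1)) a b = intervalProd f (a + 1) (b + 1) := by
  rw [intervalProd, intervalProd, Nat.add_sub_add_right, add_comm a, ← List.map_add_range',
    List.map_map]
  simp only [Function.comp_def, add_comm 1]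

theorem intervalProd_mem {S : Submonoid M} (hf : ∀ k, f k ∈ S) (a b : ℕ) :
    intervalProd f a b ∈ S :=
  Submonoid.list_prod_mem S fun _ hx => by
    obtain ⟨k, -, rfl⟩ := List.mem_map.1 hx
    exact hf k

end IntervalProd

theorem Relation.ReflTransGen.exists_rel_of_not {α : Type*} {r : α → α → Prop} {p : α → Prop}
    {a b : α} (h : Relation.ReflTransGen r a b) (ha : p a) (hb : ¬ p b) :
    ∃ x y, p x ∧ ¬ p y ∧ r x y := by
  induction h with
  | refl => exact absurd ha hb
  | @tail y z _ hyz ih =>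
    by_cases hy : p y
    · exact ⟨y, z, hy, hb, hyz⟩
    · exact ih hy

variable {n : Type*} [Fintype n]

section NonnegMatrix

theorem mul_le_vecMul_apply {x : n → ℝ} {A : Matrix n n ℝ} (hx : ∀ l, 0 ≤ x l)
    (hA : ∀ i j, 0 ≤ A i j) (l j : n) : x l * A l j ≤ (x ᵥ* A) j :=
  single_le_sum (f := fun l => x l * A l j) (fun l _ => mul_nonneg (hx l) (hA l j)) (mem_univ l)

theorem mul_apply_pos {A B : Matrix n n ℝ} (hA : ∀ i j, 0 ≤ A i j) (hB : ∀ i j, 0 ≤ B i j)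
    {i l j : n} (h₁ : 0 < A i l) (h₂ : 0 < B l j) : 0 < (A * B) i j :=
  (mul_pos h₁ h₂).trans_le (mul_le_vecMul_apply (hA i) hB l j)

noncomputable def posSupport (x : n → ℝ) : Finset n :=
  univ.filter fun j => 0 < x j

@[simp]
theorem mem_posSupport {x : n → ℝ} {j : n} : j ∈ posSupport x ↔ 0 < x j := by
  simp [posSupport]

theorem posSupport_subset_vecMul {x : n → ℝ} {A : Matrix n n ℝ} (hx : ∀ l, 0 ≤ x l)
    (hA : ∀ i j, 0 ≤ A i j) (hdiag : ∀ i, 0 < A i i) : posSupport x ⊆ posSupport (x ᵥ* A) :=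
  fun j hj => mem_posSupport.2 <|
    (mul_pos (mem_posSupport.1 hj) (hdiag j)).trans_le (mul_le_vecMul_apply hx hA j j)

theorem min_card_le_card_posSupport_vecMul {x : n → ℝ} {A : Matrix n n ℝ} (hx : ∀ l, 0 ≤ x l)
    (hA : ∀ i j, 0 ≤ A i j) (hdiag : ∀ i, 0 < A i i)
    (hconn : ∀ i j, Relation.ReflTransGen (fun a b => 0 < A a b) i j)
    (hne : (posSupport x).Nonempty) :
    min (Fintype.card n) (#(posSupport x) + 1) ≤ #(posSupport (x ᵥ* A)) := by
  have hsub := posSupport_subset_vecMul hx hA hdiag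
  by_cases huniv : posSupport x = univ
  · rw [huniv, univ_subset_iff] at hsub
    rw [hsub, card_univ]
    exact min_le_left _ _
  obtain ⟨i, hi⟩ := hne
  obtain ⟨j, hj⟩ : ∃ j, j ∉ posSupport x := by simpa [eq_univ_iff_forall] using huniv
  obtain ⟨a, b, ha, hb, hab⟩ :=
    (hconn i j).exists_rel_of_not (p := (· ∈ posSupport x)) hi hj
  have hb' : b ∈ posSupport (x ᵥ* A) := mem_posSupport.2 <|
    (mul_pos (mem_posSupport.1 ha) hab).trans_le (mul_le_vecMul_apply hx hA a b)
  have hlt : #(posSupport x) < #(posSupport (x ᵥ* A)) :=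
    card_lt_card ((ssubset_iff_of_subset hsub).2 ⟨b, hb', hb⟩)
  exact (min_le_right _ _).trans hlt

theorem sum_mul_le_sub_mul {w x : n → ℝ} {M : ℝ} (hw : ∀ l, 0 ≤ w l) (hw₁ : ∑ l, w l = 1)
    (hx : ∀ l, x l ≤ M) (l₀ : n) : ∑ l, x l * w l ≤ M - w l₀ * (M - x l₀) := by
  have hgap : ∑ l, w l * (M - x l) = (∑ l, w l) * M - ∑ l, x l * w l := by
    rw [sum_mul, ← sum_sub_distrib]
    exact sum_congr rfl fun l _ => by ring
  rw [hw₁, one_mul] at hgap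
  have : w l₀ * (M - x l₀) ≤ ∑ l, w l * (M - x l) :=
    single_le_sum (f := fun l => w l * (M - x l))
      (fun l _ => mul_nonneg (hw l) (sub_nonneg.2 (hx l))) (mem_univ l₀)
  linarith

end NonnegMatrix

section Spread

variable [Nonempty n]

noncomputable def spread (x : n → ℝ) : ℝ :=
  univ.sup' univ_nonempty x - univ.inf' univ_nonempty x

theorem spread_le_one {x : n → ℝ} (h₀ : ∀ j, 0 ≤ x j) (h₁ : ∀ j, x j ≤ 1) : spread x ≤ 1 := by
  have hsup : univ.sup' univ_nonempty x ≤ 1 := sup'_le _ _ fun j _ => h₁ j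
  have hinf : 0 ≤ univ.inf' univ_nonempty x := le_inf' _ _ fun j _ => h₀ j
  rw [spread]
  linarith

/-- Each column of `A` averages `x` with every weight at least `η`, which moves every entry of
`x ᵥ* A` at least `η · spread x` away from both the maximum and the minimum of `x`. -/
theorem spread_vecMul_le {η : ℝ} {A : Matrix n n ℝ} (hA : ∀ i j, η ≤ A i j) (hη : 0 ≤ η)
    (hcol : ∀ j, ∑ i, A i j = 1) (x : n → ℝ) : spread (x ᵥ* A) ≤ (1 - 2 * η) * spread x := by
  obtain ⟨lM, -, hlM⟩ := exists_mem_eq_sup' univ_nonempty x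
  obtain ⟨lm, -, hlm⟩ := exists_mem_eq_inf' univ_nonempty x
  have hle : ∀ l, x l ≤ x lM := fun l => hlM ▸ le_sup' x (mem_univ l)
  have hge : ∀ l, x lm ≤ x l := fun l => hlm ▸ inf'_le x (mem_univ l)
  have hA₀ : ∀ i j, 0 ≤ A i j := fun i j => hη.trans (hA i j)
  have hupper : ∀ j, (x ᵥ* A) j ≤ x lM - η * (x lM - x lm) := fun j =>
    calc (x ᵥ* A) j ≤ x lM - A lm j * (x lM - x lm) :=
          sum_mul_le_sub_mul (fun l => hA₀ l j) (hcol j) hle lm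
      _ ≤ x lM - η * (x lM - x lm) := by
          gcongr
          · exact sub_nonneg.2 (hge lM)
          · exact hA lm j
  have hlower : ∀ j, x lm + η * (x lM - x lm) ≤ (x ᵥ* A) j := fun j => by
    have h := sum_mul_le_sub_mul (x := -x) (fun l => hA₀ l j) (hcol j)
      (fun l => neg_le_neg (hge l)) lM
    have hη' : η * (x lM - x lm) ≤ A lM j * (x lM - x lm) :=
      mul_le_mul_of_nonneg_right (hA lM j) (sub_nonneg.2 (hge lM))
    simp only [Pi.neg_apply, neg_mul, sum_neg_distrib] at h
    change x lm + η * (x lM - x lm) ≤ ∑ l, x l * A l j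
    linarith
  have hsup := sup'_le univ_nonempty (x ᵥ* A) fun j _ => hupper j
  have hinf := le_inf' univ_nonempty (x ᵥ* A) fun j _ => hlower j
  rw [spread, spread, hlM, hlm]
  linarith

theorem abs_sub_inv_card_le_spread {x : n → ℝ} (hx : ∑ j, x j = 1) (j : n) :
    |x j - 1 / Fintype.card n| ≤ spread x := by
  have hcard : (0 : ℝ) < Fintype.card n := by exact_mod_cast Fintype.card_pos
  have hinf : univ.inf' univ_nonempty x ≤ 1 / Fintype.card n := by
    have h := card_nsmul_le_sum univ x (univ.inf' univ_nonempty x) fun l _ =>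
      inf'_le x (mem_univ l)
    rw [hx, card_univ, nsmul_eq_mul] at h
    rw [le_div_iff₀ hcard]
    linarith
  have hsup : 1 / Fintype.card n ≤ univ.sup' univ_nonempty x := by
    have h := sum_le_card_nsmul univ x (univ.sup' univ_nonempty x) fun l _ =>
      le_sup' x (mem_univ l)
    rw [hx, card_univ, nsmul_eq_mul] at h
    rw [div_le_iff₀ hcard]
    linarith
  have h₁ := le_sup' x (mem_univ j)
  have h₂ := inf'_le x (mem_univ j)
  rw [abs_le, spread]
  constructor <;> linarith

end Spread

variable [DecidableEq n]

theorem card_mul_le_one_of_le {A : Matrix n n ℝ} (hA : A ∈ doublyStochastic ℝ n) {η : ℝ}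
    (h : ∀ i j, η ≤ A i j) (i : n) : Fintype.card n * η ≤ 1 := by
  have := card_nsmul_le_sum univ (A i) η fun j _ => h i j
  rwa [sum_row_of_mem_doublyStochastic hA, card_univ, nsmul_eq_mul] at this

structure IsConsensusMatrix (c : ℝ) (A : Matrix n n ℝ) : Prop where
  mem_doublyStochastic : A ∈ doublyStochastic ℝ n
  diag_pos : ∀ i, 0 < A i i
  le_of_ne_zero : ∀ i j, A i j ≠ 0 → c ≤ A i j

namespace IsConsensusMatrix

variable {c d : ℝ} {A B : Matrix n n ℝ}

theorem nonneg (h : IsConsensusMatrix c A) (i j : n) : 0 ≤ A i j :=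
  nonneg_of_mem_doublyStochastic h.mem_doublyStochastic

theorem one : IsConsensusMatrix 1 (1 : Matrix n n ℝ) where
  mem_doublyStochastic := one_mem _
  diag_pos i := by simp
  le_of_ne_zero i j h := by
    by_cases hij : i = j
    · subst hij; simp
    · simp [one_apply_ne hij] at h

theorem mul (hA : IsConsensusMatrix c A) (hB : IsConsensusMatrix d B) (hd : 0 ≤ d) :
    IsConsensusMatrix (c * d) (A * B) where
  mem_doublyStochastic := mul_mem hA.mem_doublyStochastic hB.mem_doublyStochastic
  diag_pos i := mul_apply_pos hA.nonneg hB.nonneg (hA.diag_pos i) (hB.diag_pos i)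
  le_of_ne_zero i j h := by
    obtain ⟨l, -, hl⟩ := exists_ne_zero_of_sum_ne_zero h
    calc c * d ≤ A i l * B l j :=
          mul_le_mul (hA.le_of_ne_zero i l (left_ne_zero_of_mul hl))
            (hB.le_of_ne_zero l j (right_ne_zero_of_mul hl)) hd (hA.nonneg i l)
      _ ≤ (A * B) i j := mul_le_vecMul_apply (hA.nonneg i) hB.nonneg l j

theorem list_prod {l : List (Matrix n n ℝ)} (hc : 0 ≤ c)
    (hl : ∀ A ∈ l, IsConsensusMatrix c A) : IsConsensusMatrix (c ^ l.length) l.prod := by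
  induction l with
  | nil => simpa using one
  | cons A l ih =>
    rw [List.prod_cons, List.length_cons, pow_succ']
    exact (hl A (by simp)).mul (ih fun B hB => hl B (by simp [hB])) (pow_nonneg hc _)

end IsConsensusMatrix

/-- `B`-bounded connectivity, for a sequence indexed from `0`. -/
def IsBlockConnected (P : ℕ → Matrix n n ℝ) (B : ℕ) : Prop :=
  ∀ m (i j : n),
    Relation.ReflTransGen (fun a b => ∃ k ∈ Ico (m * B) ((m + 1) * B), 0 < P k a b) i j

section Consensus

variable {P : ℕ → Matrix n n ℝ} {c : ℝ} {B : ℕ}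

theorem isConsensusMatrix_intervalProd (hc : 0 ≤ c) (hP : ∀ k, IsConsensusMatrix c (P k))
    (a b : ℕ) : IsConsensusMatrix (c ^ (b - a)) (intervalProd P a b) := by
  simpa [intervalProd] using
    IsConsensusMatrix.list_prod (l := (List.range' a (b - a)).map P) hc fun A hA => by
      obtain ⟨k, -, rfl⟩ := List.mem_map.1 hA
      exact hP k

theorem intervalProd_apply_pos (hc : 0 ≤ c) (hP : ∀ k, IsConsensusMatrix c (P k))
    {a b k : ℕ} (hak : a ≤ k) (hkb : k < b) {x y : n} (hxy : 0 < P k x y) :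
    0 < intervalProd P a b x y := by
  have hG := isConsensusMatrix_intervalProd hc hP
  rw [← intervalProd_mul_intervalProd P hak hkb.le,
    ← intervalProd_mul_intervalProd P k.le_succ hkb, intervalProd_succ_self]
  have hPG := (hP k).mul (hG (k + 1) b) (pow_nonneg hc _)
  exact mul_apply_pos (hG a k).nonneg hPG.nonneg ((hG a k).diag_pos x)
    (mul_apply_pos (hP k).nonneg (hG _ b).nonneg hxy ((hG _ b).diag_pos y))

theorem intervalProd_window_pos (hc : 0 ≤ c) (hP : ∀ k, IsConsensusMatrix c (P k))
    (hconn : IsBlockConnected P B)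
    (m : ℕ) (i j : n) : 0 < intervalProd P (m * B) ((m + (Fintype.card n - 1)) * B) i j := by
  have hG := isConsensusMatrix_intervalProd hc hP
  have hgrow : ∀ t, min (Fintype.card n) (t + 1) ≤
      #(posSupport (intervalProd P (m * B) ((m + t) * B) i)) := by
    intro t
    induction t with
    | zero =>
      simp only [zero_add, add_zero, intervalProd_self]
      exact (min_le_right _ _).trans (card_pos.2 ⟨i, by simp⟩)
    | succ t ih =>
      have hblock : ∀ a b : n, Relation.ReflTransGen
          (fun a b => 0 < intervalProd P ((m + t) * B) ((m + t + 1) * B) a b) a b :=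
        fun a b => (hconn (m + t) a b).lift id fun x y ⟨k, hk, hxy⟩ =>
          intervalProd_apply_pos hc hP (mem_Ico.1 hk).1 (mem_Ico.1 hk).2 hxy
      have hsplit := intervalProd_mul_intervalProd P
        (Nat.mul_le_mul_right B (Nat.le_add_right m t))
        (Nat.mul_le_mul_right B (Nat.le_add_right (m + t) 1))
      rw [← add_assoc, ← hsplit, mul_apply_eq_vecMul]
      have hrow := hG (m * B) ((m + t) * B)
      have := min_card_le_card_posSupport_vecMul (hrow.nonneg i) (hG _ _).nonneg
        (hG _ _).diag_pos hblock ⟨i, mem_posSupport.2 (hrow.diag_pos i)⟩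
      omega
  have hfull := hgrow (Fintype.card n - 1)
  have : posSupport (intervalProd P (m * B) ((m + (Fintype.card n - 1)) * B) i) = univ :=
    eq_univ_of_card _ (le_antisymm (card_le_univ _) (by omega))
  exact mem_posSupport.1 (this ▸ mem_univ j)

theorem pow_le_intervalProd_window (hc : 0 < c) (hP : ∀ k, IsConsensusMatrix c (P k))
    (hconn : IsBlockConnected P B)
    (m : ℕ) (i j : n) :
    c ^ ((Fintype.card n - 1) * B) ≤
      intervalProd P (m * B) ((m + (Fintype.card n - 1)) * B) i j := by
  have h := (isConsensusMatrix_intervalProd hc.le hP _ _).le_of_ne_zero i j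
    (intervalProd_window_pos hc.le hP hconn m i j).ne'
  rw [add_mul] at h ⊢
  rwa [Nat.add_sub_cancel_left] at h

section Spread

variable [Nonempty n]

theorem spread_intervalProd_le_of_le (hP : ∀ k, P k ∈ doublyStochastic ℝ n) {s a b : ℕ}
    (hsa : s ≤ a) (hab : a ≤ b) (i : n) :
    spread (intervalProd P s b i) ≤ spread (intervalProd P s a i) := by
  have hG := intervalProd_mem P hP a b
  rw [← intervalProd_mul_intervalProd P hsa hab, mul_apply_eq_vecMul]
  simpa using spread_vecMul_le (fun _ _ => nonneg_of_mem_doublyStochastic hG) le_rfl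
    (sum_col_of_mem_doublyStochastic hG) (intervalProd P s a i)

theorem spread_intervalProd_le_pow (hc : 0 < c) (hP : ∀ k, IsConsensusMatrix c (P k))
    (hconn : IsBlockConnected P B)
    (hB : 0 < B) (hn : 2 ≤ Fintype.card n) (s : ℕ) (i : n) (T : ℕ) :
    spread (intervalProd P s ((s + T * (Fintype.card n - 1)) * B) i) ≤
      (1 - 2 * c ^ ((Fintype.card n - 1) * B)) ^ T := by
  set η := c ^ ((Fintype.card n - 1) * B)
  have hG := isConsensusMatrix_intervalProd hc.le hP
  have hwin := pow_le_intervalProd_window hc hP hconn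
  have hη : 2 * η ≤ 1 := by
    have h := card_mul_le_one_of_le (hG _ _).mem_doublyStochastic (hwin 0) i
    have hn' : (2 : ℝ) ≤ Fintype.card n := by exact_mod_cast hn
    nlinarith [pow_pos hc ((Fintype.card n - 1) * B)]
  induction T with
  | zero =>
    have hrow := (hG s ((s + 0 * (Fintype.card n - 1)) * B)).mem_doublyStochastic
    rw [pow_zero]
    exact spread_le_one (fun _ => nonneg_of_mem_doublyStochastic hrow)
      (fun _ => le_one_of_mem_doublyStochastic hrow)
  | succ T ih =>
    have hs : s ≤ (s + T * (Fintype.card n - 1)) * B :=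
      (Nat.le_add_right s _).trans (Nat.le_mul_of_pos_right _ hB)
    rw [show (s + (T + 1) * (Fintype.card n - 1)) * B =
        (s + T * (Fintype.card n - 1) + (Fintype.card n - 1)) * B by ring,
      ← intervalProd_mul_intervalProd P hs (Nat.mul_le_mul_right B (Nat.le_add_right _ _)),
      mul_apply_eq_vecMul, pow_succ']
    calc _ ≤ (1 - 2 * η) * spread (intervalProd P s ((s + T * (Fintype.card n - 1)) * B) i) :=
          spread_vecMul_le (hwin _) (pow_nonneg hc.le _)
            (sum_col_of_mem_doublyStochastic (hG _ _).mem_doublyStochastic) _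
      _ ≤ (1 - 2 * η) * (1 - 2 * η) ^ T := mul_le_mul_of_nonneg_left ih (by linarith)

end Spread

theorem tendsto_intervalProd_apply (hc : 0 < c) (hP : ∀ k, IsConsensusMatrix c (P k))
    (hconn : IsBlockConnected P B)
    (hB : 0 < B) (hn : 2 ≤ Fintype.card n) (s : ℕ) (i j : n) :
    Tendsto (fun k => intervalProd P s k i j) atTop (𝓝 (1 / Fintype.card n)) := by
  have : Nonempty n := ⟨i⟩
  rw [Metric.tendsto_atTop]
  intro ε hε
  obtain ⟨T, hT⟩ := exists_pow_lt_of_lt_one hε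
    (sub_lt_self 1 (by positivity : 0 < 2 * c ^ ((Fintype.card n - 1) * B)))
  have hs : s ≤ (s + T * (Fintype.card n - 1)) * B :=
    (Nat.le_add_right s _).trans (Nat.le_mul_of_pos_right _ hB)
  refine ⟨(s + T * (Fintype.card n - 1)) * B, fun k hk => ?_⟩
  have hrow := sum_row_of_mem_doublyStochastic
    (isConsensusMatrix_intervalProd hc.le hP s k).mem_doublyStochastic i
  calc dist (intervalProd P s k i j) (1 / Fintype.card n)
      ≤ spread (intervalProd P s k i) := abs_sub_inv_card_le_spread hrow j
    _ ≤ spread (intervalProd P s ((s + T * (Fintype.card n - 1)) * B) i) :=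
      spread_intervalProd_le_of_le (fun k => (hP k).mem_doublyStochastic) hs hk i
    _ ≤ _ := spread_intervalProd_le_pow hc hP hconn hB hn s i T
    _ < ε := hT

end Consensus

theorem stmt9_general (N B : ℕ) (hN : 2 ≤ N) (hB : 1 ≤ B)
    (β : ℝ) (hβ0 : 0 < β)
    (P : ℕ → Matrix (Fin N) (Fin N) ℝ)
    (hPnn : ∀ k, 1 ≤ k → ∀ i j, 0 ≤ P k i j)
    (hProw : ∀ k, 1 ≤ k → ∀ i, ∑ j, P k i j = 1)
    (hPcol : ∀ k, 1 ≤ k → ∀ j, ∑ i, P k i j = 1)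
    (hPdiag : ∀ k, 1 ≤ k → ∀ i, β ≤ P k i i)
    (hPoff : ∀ k, 1 ≤ k → ∀ i j, P k i j ≠ 0 → β ≤ P k i j)
    (hconn : ∀ m : ℕ, ∀ i j : Fin N,
      Relation.ReflTransGen
        (fun a b => ∃ k ∈ Finset.Icc (m * B + 1) ((m + 1) * B), 0 < P k a b) i j)
    (Phi : ℕ → ℕ → Matrix (Fin N) (Fin N) ℝ)
    (hPhi : ∀ k s, Phi k s = ((List.range' s (k + 1 - s)).map P).prod) :
    ∀ s : ℕ, 1 ≤ s → ∀ i j : Fin N,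
      Filter.Tendsto (fun k => Phi k s i j) Filter.atTop (nhds (1 / (N : ℝ))) := by
  intro s hs i j
  set Q : ℕ → Matrix (Fin N) (Fin N) ℝ := fun k => P (k + 1)
  have hQ : ∀ k, IsConsensusMatrix β (Q k) := fun k =>
    { mem_doublyStochastic := mem_doublyStochastic_iff_sum.2
        ⟨hPnn _ k.succ_pos, hProw _ k.succ_pos, hPcol _ k.succ_pos⟩
      diag_pos := fun i => hβ0.trans_le (hPdiag _ k.succ_pos i)
      le_of_ne_zero := hPoff _ k.succ_pos }
  have hQconn : IsBlockConnected Q B := fun m a b =>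
    (hconn m a b).lift id fun x y ⟨k, hk, hxy⟩ => by
      rw [mem_Icc] at hk
      refine ⟨k - 1, mem_Ico.2 (by omega), ?_⟩
      show 0 < P (k - 1 + 1) x y
      rwa [Nat.sub_add_cancel (by omega : 1 ≤ k)]
  have hPhiQ : ∀ k, Phi k s = intervalProd Q (s - 1) k := fun k => by
    rw [hPhi, intervalProd_comp_succ, Nat.sub_add_cancel hs]
    rfl
  simp_rw [hPhiQ]
  simpa using tendsto_intervalProd_apply hβ0 hQ hQconn hB (by simpa using hN) (s - 1) i j

/-- Boyd et al. consensus convergence: under the doubly stochastic, `β`-bounded-entries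
and `B`-bounded-connectivity assumptions, for every fixed `s ≥ 1` each entry of
`Φ_{k:s}` converges to `1/N` as `k → ∞`, i.e. `Φ_{k:s}` converges entrywise to
`(1/N)·1·1ᵀ`. -/
theorem stmt9 (N B : ℕ) (hN : 2 ≤ N) (hB : 1 ≤ B)
    (β : ℝ) (hβ0 : 0 < β) (hβ1 : β < 1)
    (P : ℕ → Matrix (Fin N) (Fin N) ℝ)
    (hPnn : ∀ k, 1 ≤ k → ∀ i j, 0 ≤ P k i j)
    (hProw : ∀ k, 1 ≤ k → ∀ i, ∑ j, P k i j = 1)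
    (hPcol : ∀ k, 1 ≤ k → ∀ j, ∑ i, P k i j = 1)
    (hPdiag : ∀ k, 1 ≤ k → ∀ i, β ≤ P k i i)
    (hPoff : ∀ k, 1 ≤ k → ∀ i j, P k i j ≠ 0 → β ≤ P k i j)
    (hconn : ∀ m : ℕ, ∀ i j : Fin N,
      Relation.ReflTransGen
        (fun a b => ∃ k ∈ Finset.Icc (m * B + 1) ((m + 1) * B), 0 < P k a b) i j)
    (Phi : ℕ → ℕ → Matrix (Fin N) (Fin N) ℝ)
    (hPhi : ∀ k s, Phi k s = ((List.range' s (k + 1 - s)).map P).prod) :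
    ∀ s : ℕ, 1 ≤ s → ∀ i j : Fin N,
      Filter.Tendsto (fun k => Phi k s i j) Filter.atTop (nhds (1 / (N : ℝ))) :=
  stmt9_general N B hN hB β hβ0 P hPnn hProw hPcol hPdiag hPoff hconn Phi hPhi
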